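/- arXiv:1803.04386 — 3 statements merged into one kernel-verified Lean document; each statement's English description precedes it below -/
import Mathlib

section
/- For any ε > 0 and μ ∈ ℝ, if W = μ + σ·Z with Z standard normal, then for any bounded measurable F: ℝ → ℝ, ∇_μ E[F(μ + σZ)] = (1/σ²) E[(σZ)·F(μ + σZ)], provided F is Lipschitz. -/
/-!
Write `E[F(μ + σZ)] = ∫ F(x) φ_μ(x) dx`, where `φ_μ` is the density of `N(μ, σ²)`, and
differentiate under the integral sign: `∂_μ φ_μ(x) = (x - μ)/σ² · φ_μ(x)`, which turns back into
`σ⁻² E[(σZ) F(μ + σZ)]`. Differentiation is justified by dominated convergence: for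
`|μ - m| ≤ 1`, the inequality `(x - m)² ≤ 2(x - μ)² + 2(μ - m)²` bounds `|x - μ| φ_μ(x)` by a
multiple of `(|x - m| + 1) exp(-(x - m)²/(4σ²))`, uniformly in `μ`.
-/

open MeasureTheory ProbabilityTheory Real
open scoped NNReal

namespace ProbabilityTheory

lemma hasDerivAt_gaussianPDFReal_mean (v : ℝ≥0) (x μ : ℝ) :
    HasDerivAt (gaussianPDFReal · v x) ((x - μ) / v * gaussianPDFReal μ v x) μ := by
  have hexponent : HasDerivAt (fun μ ↦ -(x - μ) ^ 2 / (2 * v)) ((x - μ) / v) μ :=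
    (((hasDerivAt_id' μ).const_sub x).fun_pow 2).neg.div_const (2 * (v : ℝ)) |>.congr_deriv
      (by norm_num; ring)
  exact (hexponent.exp.const_mul _).congr_deriv (by rw [gaussianPDFReal]; ring)

lemma abs_sub_mul_gaussianPDFReal_le {v : ℝ≥0} {m μ : ℝ} (hμ : |μ - m| ≤ 1) (x : ℝ) :
    |x - μ| * gaussianPDFReal μ v x ≤ (√(2 * π * v))⁻¹ * rexp (1 / (2 * v)) *
      ((|x - m| + 1) * rexp (-(4 * (v : ℝ))⁻¹ * (x - m) ^ 2)) := by
  have hdist : |x - μ| ≤ |x - m| + 1 := by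
    linarith [abs_sub_le x m μ, abs_sub_comm m μ]
  have hexponent : -(x - μ) ^ 2 / (2 * v) ≤ 1 / (2 * v) + -(4 * (v : ℝ))⁻¹ * (x - m) ^ 2 := by
    have hsq : (μ - m) ^ 2 ≤ 1 := by nlinarith [abs_nonneg (μ - m), sq_abs (μ - m)]
    calc -(x - μ) ^ 2 / (2 * v) = -(2 * (x - μ) ^ 2) / (4 * v) := by ring
      _ ≤ (2 - (x - m) ^ 2) / (4 * v) := by
        gcongr
        nlinarith [sq_nonneg (x + m - 2 * μ)]
      _ = _ := by ring
  calc |x - μ| * gaussianPDFReal μ v x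
      ≤ (|x - m| + 1) *
          ((√(2 * π * v))⁻¹ * rexp (1 / (2 * v) + -(4 * (v : ℝ))⁻¹ * (x - m) ^ 2)) := by
        rw [gaussianPDFReal]
        gcongr
    _ = _ := by rw [exp_add]; ring

lemma integrable_abs_add_one_mul_exp_neg_mul_sq {b : ℝ} (hb : 0 < b) :
    Integrable fun x : ℝ ↦ (|x| + 1) * rexp (-b * x ^ 2) := by
  have habs : Integrable fun x : ℝ ↦ |x| * rexp (-b * x ^ 2) := by
    simpa [abs_mul] using (integrable_mul_exp_neg_mul_sq hb).abs
  simp_rw [add_one_mul]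
  exact habs.add (integrable_exp_neg_mul_sq hb)

theorem hasDerivAt_integral_gaussianReal_mean {F : ℝ → ℝ} (hF : AEStronglyMeasurable F)
    {C : ℝ} (hC : ∀ x, |F x| ≤ C) {v : ℝ≥0} (hv : v ≠ 0) (m : ℝ) :
    HasDerivAt (fun μ ↦ ∫ x, F x ∂gaussianReal μ v)
      ((v : ℝ)⁻¹ * ∫ x, (x - m) * F x ∂gaussianReal m v) m := by
  simp_rw [integral_gaussianReal_eq_integral_smul hv, smul_eq_mul]
  have hv_pos : (0 : ℝ) < v := by positivity
  set K := C * (v : ℝ)⁻¹ * ((√(2 * π * v))⁻¹ * rexp (1 / (2 * v)))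
  have hbound : ∀ x, ∀ μ ∈ Metric.ball m 1,
      ‖(x - μ) / v * gaussianPDFReal μ v x * F x‖ ≤
        K * ((|x - m| + 1) * rexp (-(4 * (v : ℝ))⁻¹ * (x - m) ^ 2)) := by
    intro x μ hμ
    rw [Metric.mem_ball, dist_eq] at hμ
    calc ‖(x - μ) / v * gaussianPDFReal μ v x * F x‖
        = (v : ℝ)⁻¹ * (|x - μ| * gaussianPDFReal μ v x) * |F x| := by
          rw [norm_mul, norm_mul, norm_div, norm_of_nonneg (gaussianPDFReal_nonneg _ _ _),
            norm_of_nonneg hv_pos.le, norm_eq_abs, norm_eq_abs]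
          ring
      _ ≤ (v : ℝ)⁻¹ * ((√(2 * π * v))⁻¹ * rexp (1 / (2 * v)) *
            ((|x - m| + 1) * rexp (-(4 * (v : ℝ))⁻¹ * (x - m) ^ 2))) * C := by
          gcongr _ * ?_ * ?_
          exacts [abs_sub_mul_gaussianPDFReal_le hμ.le x, hC x]
      _ = _ := by ring
  have hbound_int :
      Integrable fun x ↦ K * ((|x - m| + 1) * rexp (-(4 * (v : ℝ))⁻¹ * (x - m) ^ 2)) :=
    ((integrable_abs_add_one_mul_exp_neg_mul_sq (by positivity)).comp_sub_right m).const_mul K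
  have hint := fun μ ↦ (integrable_gaussianPDFReal μ v).mul_bdd hF (ae_of_all _ hC)
  obtain ⟨-, hderiv⟩ := hasDerivAt_integral_of_dominated_loc_of_deriv_le
    (Metric.ball_mem_nhds m one_pos) (.of_forall fun μ ↦ (hint μ).aestronglyMeasurable)
    (hint m) (by fun_prop) (ae_of_all _ hbound) hbound_int
    (ae_of_all _ fun x μ _ ↦ (hasDerivAt_gaussianPDFReal_mean v x μ).mul_const (F x))
  refine hderiv.congr_deriv ?_
  rw [← integral_const_mul]
  congr with x
  ring

lemma hasLaw_const_add_mul_gaussianReal_std (μ σ : ℝ) :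
    HasLaw (fun z ↦ μ + σ * z) (gaussianReal μ (.mk (σ ^ 2) (sq_nonneg σ)))
      (gaussianReal 0 1) := by
  simpa using gaussianReal_const_add (gaussianReal_const_mul (HasLaw.id (μ := gaussianReal 0 1)) σ) μ

end ProbabilityTheory

theorem es_gradient_identity_general
    (σ : ℝ) (hσ : 0 < σ) (m : ℝ) (F : ℝ → ℝ)
    (hF_meas : Measurable F)
    (hF_bdd : ∃ C, ∀ x, |F x| ≤ C) :
    HasDerivAt (fun μ' : ℝ => ∫ z, F (μ' + σ * z) ∂(gaussianReal 0 1))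
      ((1 / σ ^ 2) * ∫ z, (σ * z) * F (m + σ * z) ∂(gaussianReal 0 1)) m := by
  obtain ⟨C, hC⟩ := hF_bdd
  have hv : NNReal.mk (σ ^ 2) (sq_nonneg σ) ≠ 0 := by
    rw [← NNReal.coe_ne_zero]
    exact pow_ne_zero 2 hσ.ne'
  have hlaw := (hasLaw_const_add_mul_gaussianReal_std · σ)
  have hderiv := hasDerivAt_integral_gaussianReal_mean hF_meas.aestronglyMeasurable hC hv m
  simp_rw [← (hlaw _).integral_comp hF_meas.aestronglyMeasurable] at hderiv
  rw [← (hlaw m).integral_comp (by fun_prop)] at hderiv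
  simpa [one_div] using hderiv

/-- One-dimensional evolution-strategies gradient identity: for `σ > 0` and a
bounded, measurable, Lipschitz `F : ℝ → ℝ`, the derivative in `μ` of
`E[F(μ + σZ)]`, `Z ~ N(0,1)`, equals `(1/σ²) E[(σZ)·F(μ + σZ)]`. -/
theorem es_gradient_identity
    (σ : ℝ) (hσ : 0 < σ) (m : ℝ) (F : ℝ → ℝ)
    (hF_meas : Measurable F)
    (hF_bdd : ∃ C, ∀ x, |F x| ≤ C)
    (hF_lip : ∃ K : NNReal, LipschitzWith K F) :
    HasDerivAt (fun μ' : ℝ => ∫ z, F (μ' + σ * z) ∂(gaussianReal 0 1))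
      ((1 / σ ^ 2) * ∫ z, (σ * z) * F (m + σ * z) ∂(gaussianReal 0 1)) m :=
  es_gradient_identity_general σ hσ m F hF_meas hF_bdd
end

section
/- Let (x_n)_{n=1}^N be i.i.d. random variables, and for each n let G_n = g(x_n, Δ) where Δ is a random perturbation independent of the x_n's and g is square-integrable. Then Var((1/N)∑ G_n) = (1/N)·Var(G_1) + ((N-1)/N)·E_{x,x'}[Cov_Δ(g(x,Δ), g(x',Δ) | x, x')], where x, x' are independent copies of x_1. -/
/-!
Expanding the variance of the sum gives `N` variances and `N (N - 1)` covariances. Each pair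
`(xₙ, Δ)` has law `ν ⊗ ρ`, so all the variances equal `Var(G₁)`. For `n ≠ q` the triple
`((xₙ, x_q), Δ)` has law `(ν ⊗ ν) ⊗ ρ`, and Fubini on that product turns `Cov(Gₙ, G_q)` into
the `(x, x')`-average of the covariance over `Δ` alone.
-/

open MeasureTheory ProbabilityTheory
open scoped ENNReal

theorem ProbabilityTheory.IndepFun.measurePreserving_prodMk {Ω α β : Type*}
    [MeasurableSpace Ω] [MeasurableSpace α] [MeasurableSpace β] {μ : Measure Ω}
    [IsFiniteMeasure μ] {X : Ω → α} {Y : Ω → β} (h : IndepFun X Y μ)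
    (hX : Measurable X) (hY : Measurable Y) :
    MeasurePreserving (fun ω ↦ (X ω, Y ω)) μ ((μ.map X).prod (μ.map Y)) :=
  ⟨hX.prodMk hY, (indepFun_iff_map_prod_eq_prod_map_map hX.aemeasurable hY.aemeasurable).mp h⟩

section MeasurePreserving

variable {α β : Type*} [MeasurableSpace α] [MeasurableSpace β] {μ : Measure α}
  {ν : Measure β} {T : α → β}

theorem MeasureTheory.MeasurePreserving.integral_fun_comp (hT : MeasurePreserving T μ ν)
    {f : β → ℝ} (hf : AEStronglyMeasurable f ν) :
    ∫ a, f (T a) ∂μ = ∫ b, f b ∂ν := by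
  rw [← hT.map_eq] at hf ⊢
  exact (integral_map hT.aemeasurable hf).symm

theorem MeasureTheory.MeasurePreserving.covariance_fun_comp (hT : MeasurePreserving T μ ν)
    {X Y : β → ℝ} (hX : AEStronglyMeasurable X ν) (hY : AEStronglyMeasurable Y ν) :
    cov[fun a ↦ X (T a), fun a ↦ Y (T a); μ] = cov[X, Y; ν] := by
  rw [← hT.map_eq] at hX hY ⊢
  exact (covariance_map_fun hX hY hT.aemeasurable).symm

end MeasurePreserving

section SharedCoordinate

variable {A B P : Type*} [MeasurableSpace A] [MeasurableSpace B] [MeasurableSpace P]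
  {ν₁ : Measure A} {ν₂ : Measure B} {ρ : Measure P}

theorem MeasureTheory.MemLp.comp_prodMap_fst [SFinite ν₁] [SFinite ρ] {p : ℝ≥0∞}
    {g : A → P → ℝ} (hg : MemLp (Function.uncurry g) p (ν₁.prod ρ))
    (ν₂ : Measure B) [IsProbabilityMeasure ν₂] :
    MemLp (fun z : (A × B) × P ↦ g z.1.1 z.2) p ((ν₁.prod ν₂).prod ρ) :=
  hg.comp_measurePreserving (measurePreserving_fst.prod (.id ρ))

theorem MeasureTheory.MemLp.comp_prodMap_snd [SFinite ν₂] [SFinite ρ] {p : ℝ≥0∞}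
    {h : B → P → ℝ} (hh : MemLp (Function.uncurry h) p (ν₂.prod ρ))
    (ν₁ : Measure A) [IsProbabilityMeasure ν₁] :
    MemLp (fun z : (A × B) × P ↦ h z.1.2 z.2) p ((ν₁.prod ν₂).prod ρ) :=
  hh.comp_measurePreserving (measurePreserving_snd.prod (.id ρ))

theorem ProbabilityTheory.covariance_prod_prod_eq_integral_integral
    [IsProbabilityMeasure ν₁] [IsProbabilityMeasure ν₂] [IsProbabilityMeasure ρ]
    {g : A → P → ℝ} {h : B → P → ℝ}
    (hg : MemLp (Function.uncurry g) 2 (ν₁.prod ρ))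
    (hh : MemLp (Function.uncurry h) 2 (ν₂.prod ρ)) :
    cov[fun z : (A × B) × P ↦ g z.1.1 z.2, fun z ↦ h z.1.2 z.2; (ν₁.prod ν₂).prod ρ]
      = ∫ a, ∫ b, ((∫ e, g a e * h b e ∂ρ) - (∫ e, g a e ∂ρ) * ∫ e, h b e ∂ρ) ∂ν₂ ∂ν₁ := by
  have hG := hg.comp_prodMap_fst ν₂
  have hH := hh.comp_prodMap_snd ν₁
  have hGH : Integrable (fun z : (A × B) × P ↦ g z.1.1 z.2 * h z.1.2 z.2)
      ((ν₁.prod ν₂).prod ρ) :=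
    hG.integrable_mul hH
  have hEg : ∫ z, g z.1.1 z.2 ∂((ν₁.prod ν₂).prod ρ) = ∫ a, ∫ e, g a e ∂ρ ∂ν₁ :=
    ((measurePreserving_fst.prod (.id ρ)).integral_fun_comp hg.aestronglyMeasurable).trans
      (integral_prod _ (hg.integrable one_le_two))
  have hEh : ∫ z, h z.1.2 z.2 ∂((ν₁.prod ν₂).prod ρ) = ∫ b, ∫ e, h b e ∂ρ ∂ν₂ :=
    ((measurePreserving_snd.prod (.id ρ)).integral_fun_comp hh.aestronglyMeasurable).trans
      (integral_prod _ (hh.integrable one_le_two))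
  have hIg : Integrable (fun a ↦ ∫ e, g a e ∂ρ) ν₁ :=
    (hg.integrable one_le_two).integral_prod_left
  have hIh : Integrable (fun b ↦ ∫ e, h b e ∂ρ) ν₂ :=
    (hh.integrable one_le_two).integral_prod_left
  rw [covariance_eq_sub hG hH]
  simp only [Pi.mul_apply]
  rw [integral_prod _ hGH, hEg, hEh, ← integral_prod_mul,
    ← integral_sub hGH.integral_prod_left (hIg.mul_prod hIh)]
  exact integral_prod _ (hGH.integral_prod_left.sub (hIg.mul_prod hIh))

end SharedCoordinate

theorem ProbabilityTheory.variance_fun_sum_of_covariance_eq {Ω ι : Type*} [MeasurableSpace Ω]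
    {μ : Measure Ω} [IsFiniteMeasure μ] [Fintype ι] {X : ι → Ω → ℝ}
    (hX : ∀ i, MemLp (X i) 2 μ) {v c : ℝ} (hv : ∀ i, Var[X i; μ] = v)
    (hc : ∀ i j, i ≠ j → cov[X i, X j; μ] = c) :
    Var[fun ω ↦ ∑ i, X i ω; μ]
      = Fintype.card ι * v + Fintype.card ι * (Fintype.card ι - 1) * c := by
  classical
  have hrow (i : ι) : ∑ j, cov[X i, X j; μ] = v + (Fintype.card ι - 1) * c := by
    rw [Fintype.sum_eq_add_sum_compl i, covariance_self (hX i).aemeasurable, hv,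
      Finset.sum_congr rfl fun j hj ↦ hc i j (by rintro rfl; simp at hj),
      Finset.sum_const, Finset.card_compl, Finset.card_singleton, nsmul_eq_mul,
      Nat.cast_sub (Fintype.card_pos_iff.mpr ⟨i⟩), Nat.cast_one]
  simp only [variance_fun_sum hX, hrow, Finset.sum_const, Finset.card_univ, nsmul_eq_mul]
  ring

theorem variance_shared_perturbation_general
    {Ω A P : Type*} [MeasurableSpace Ω] [MeasurableSpace A] [MeasurableSpace P]
    (μ : Measure Ω) [IsProbabilityMeasure μ]
    {N : ℕ} (hN : 0 < N)
    (x : Fin N → Ω → A) (Δ : Ω → P) (g : A → P → ℝ)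
    (hx : ∀ n, Measurable (x n)) (hΔ : Measurable Δ)
    -- the inputs are i.i.d.
    (hiid : iIndepFun (m := fun _ : Fin N => (inferInstance : MeasurableSpace A)) x μ)
    (hident : ∀ n, Measure.map (x n) μ = Measure.map (x ⟨0, hN⟩) μ)
    -- the perturbation is independent of the whole input family
    (hind : IndepFun (fun ω n => x n ω) Δ μ)
    -- `g` is square-integrable
    (hL2 : MemLp (Function.uncurry g) 2
      ((Measure.map (x ⟨0, hN⟩) μ).prod (Measure.map Δ μ))) :
    variance (fun ω => (N : ℝ)⁻¹ * ∑ n, g (x n ω) (Δ ω)) μ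
      = (1 / N) * variance (fun ω => g (x ⟨0, hN⟩ ω) (Δ ω)) μ
        + ((N : ℝ) - 1) / N *
          ∫ a, ∫ a',
            ((∫ e, g a e * g a' e ∂(Measure.map Δ μ))
              - (∫ e, g a e ∂(Measure.map Δ μ)) * (∫ e, g a' e ∂(Measure.map Δ μ)))
            ∂(Measure.map (x ⟨0, hN⟩) μ) ∂(Measure.map (x ⟨0, hN⟩) μ) := by
  set ν := Measure.map (x ⟨0, hN⟩) μ
  set ρ := Measure.map Δ μ
  have : IsProbabilityMeasure ν := Measure.isProbabilityMeasure_map (hx _).aemeasurable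
  have : IsProbabilityMeasure ρ := Measure.isProbabilityMeasure_map hΔ.aemeasurable
  have hpair n : MeasurePreserving (fun ω ↦ (x n ω, Δ ω)) μ (ν.prod ρ) :=
    hident n ▸ (hind.comp (measurable_pi_apply n) measurable_id).measurePreserving_prodMk
      (hx n) hΔ
  have hmemLp n : MemLp (fun ω ↦ g (x n ω) (Δ ω)) 2 μ := hL2.comp_measurePreserving (hpair n)
  have hvar n : Var[fun ω ↦ g (x n ω) (Δ ω); μ] = Var[Function.uncurry g; ν.prod ρ] :=
    (hpair n).variance_fun_comp hL2.aemeasurable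
  have hcov n q (hnq : n ≠ q) : cov[fun ω ↦ g (x n ω) (Δ ω), fun ω ↦ g (x q ω) (Δ ω); μ]
      = ∫ a, ∫ a', ((∫ e, g a e * g a' e ∂ρ) - (∫ e, g a e ∂ρ) * ∫ e, g a' e ∂ρ) ∂ν ∂ν := by
    have hind' : IndepFun (fun ω ↦ (x n ω, x q ω)) Δ μ :=
      hind.comp ((measurable_pi_apply n).prodMk (measurable_pi_apply q)) measurable_id
    have hlaw := hind'.measurePreserving_prodMk ((hx n).prodMk (hx q)) hΔ
    rw [((hiid.indepFun hnq).measurePreserving_prodMk (hx n) (hx q)).map_eq, hident n,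
      hident q] at hlaw
    rw [hlaw.covariance_fun_comp (hL2.comp_prodMap_fst ν).aestronglyMeasurable
      (hL2.comp_prodMap_snd ν).aestronglyMeasurable]
    exact covariance_prod_prod_eq_integral_integral hL2 hL2
  rw [variance_const_mul, variance_fun_sum_of_covariance_eq hmemLp hvar hcov, hvar,
    Fintype.card_fin]
  field_simp

/-- Shared-perturbation variance formula: if the inputs `x n` are i.i.d. and
all share a single perturbation `Δ` independent of them, then
`Var((1/N)∑ₙ g(xₙ, Δ)) = (1/N)·Var(g(x₁,Δ)) + ((N-1)/N)·E_{x,x'}[Cov_Δ(g(x,Δ), g(x',Δ))]`. -/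
theorem variance_shared_perturbation
    {Ω A P : Type*} [MeasurableSpace Ω] [MeasurableSpace A] [MeasurableSpace P]
    (μ : Measure Ω) [IsProbabilityMeasure μ]
    {N : ℕ} (hN : 0 < N)
    (x : Fin N → Ω → A) (Δ : Ω → P) (g : A → P → ℝ)
    (hx : ∀ n, Measurable (x n)) (hΔ : Measurable Δ)
    (hg : Measurable (Function.uncurry g))
    -- the inputs are i.i.d.
    (hiid : iIndepFun (m := fun _ : Fin N => (inferInstance : MeasurableSpace A)) x μ)
    (hident : ∀ n, Measure.map (x n) μ = Measure.map (x ⟨0, hN⟩) μ)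
    -- the perturbation is independent of the whole input family
    (hind : IndepFun (fun ω n => x n ω) Δ μ)
    -- `g` is square-integrable
    (hL2 : MemLp (Function.uncurry g) 2
      ((Measure.map (x ⟨0, hN⟩) μ).prod (Measure.map Δ μ))) :
    variance (fun ω => (N : ℝ)⁻¹ * ∑ n, g (x n ω) (Δ ω)) μ
      = (1 / N) * variance (fun ω => g (x ⟨0, hN⟩ ω) (Δ ω)) μ
        + ((N : ℝ) - 1) / N *
          ∫ a, ∫ a',
            ((∫ e, g a e * g a' e ∂(Measure.map Δ μ))
              - (∫ e, g a e ∂(Measure.map Δ μ)) * (∫ e, g a' e ∂(Measure.map Δ μ)))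
            ∂(Measure.map (x ⟨0, hN⟩) μ) ∂(Measure.map (x ⟨0, hN⟩) μ) :=
  variance_shared_perturbation_general μ hN x Δ g hx hΔ hiid hident hind hL2
end

section
/- (Flipout reduces variance) Under the setup of the variance decomposition theorem, Var_shared(G_B) − Var_flipout(G_B) = ((N-1)/N)·β, where β = E_{x,x',Ŵ}[Cov_{r,s}(g(x,Δ), g(x',Δ) | x, x', Ŵ)] with Δ = Ŵ ∘ r sᵀ shared between the two examples. In particular, if β ≥ 0 then flipout never increases the variance of the averaged gradient. -/
open MeasureTheory ProbabilityTheory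
open scoped BigOperators

/-- The flipout perturbation `Ŵ ∘ r sᵀ`. -/
def flipPert {p q : ℕ} (w : Fin p → Fin q → ℝ)
    (z : (Fin p → ℝ) × (Fin q → ℝ)) : Fin p → Fin q → ℝ :=
  fun i j => w i j * (z.1 i * z.2 j)

/-!
Let `ν`, `κ`, `ρ` be the laws of an input, of `Ŵ` and of a sign pair, and let `f n`, `e n` be the
gradient of example `n` under the shared and under per-example signs. Both `(x n, Ŵ, r, s)` and
`(x n, Ŵ, rₙ, sₙ)` have law `ν ⊗ κ ⊗ ρ`, so `f n` and `e n` have the same mean and variance and only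
the off-diagonal covariances of the two averages differ. For `n ≠ m` the shared sample
`(x n, x m, Ŵ, r, s)` has law `ν ⊗ ν ⊗ κ ⊗ ρ` while `(x n, x m, Ŵ, rₙ, sₙ, rₘ, sₘ)` has law
`ν ⊗ ν ⊗ κ ⊗ ρ ⊗ ρ`; by Fubini the two mixed moments differ by `β`, and the `N (N - 1)`
off-diagonal pairs, weighted by `N⁻²`, give `(N - 1) / N · β`.
-/

lemma variance_average_sub_variance_average {Ω : Type*} [MeasurableSpace Ω] {μ : Measure Ω}
    [IsFiniteMeasure μ] {N : ℕ} {f e : Fin N → Ω → ℝ}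
    (hf : ∀ n, MemLp (f n) 2 μ) (he : ∀ n, MemLp (e n) 2 μ) {c : ℝ}
    (hdiag : ∀ n, cov[f n, f n; μ] = cov[e n, e n; μ])
    (hoff : ∀ n m, n ≠ m → cov[f n, f m; μ] - cov[e n, e m; μ] = c) :
    Var[fun ω => (N : ℝ)⁻¹ * ∑ n, f n ω; μ] - Var[fun ω => (N : ℝ)⁻¹ * ∑ n, e n ω; μ]
      = ((N : ℝ) - 1) / N * c := by
  have hrow : ∀ n, ∑ m, (cov[f n, f m; μ] - cov[e n, e m; μ]) = ((N : ℝ) - 1) * c := by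
    intro n
    rw [← Finset.sum_erase_add _ _ (Finset.mem_univ n), hdiag, sub_self, add_zero,
      Finset.sum_congr rfl fun m hm => hoff n m (Finset.ne_of_mem_erase hm).symm,
      Finset.sum_const, Finset.card_erase_of_mem (Finset.mem_univ n), Finset.card_univ,
      Fintype.card_fin, nsmul_eq_mul, Nat.cast_pred (Fin.pos n)]
  rw [variance_const_mul, variance_const_mul, variance_fun_sum hf, variance_fun_sum he, ← mul_sub,
    ← Finset.sum_sub_distrib]
  simp_rw [← Finset.sum_sub_distrib, hrow, Finset.sum_const, Finset.card_univ, Fintype.card_fin,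
    nsmul_eq_mul]
  rcases N.eq_zero_or_pos with rfl | hN
  · simp
  · field_simp

namespace ProbabilityTheory.HasLaw

variable {Ω 𝓧 E : Type*} [MeasurableSpace Ω] [MeasurableSpace 𝓧] [NormedAddCommGroup E]
  {X : Ω → 𝓧} {μ : Measure 𝓧} {P : Measure Ω}

lemma memLp_comp_iff {p : ENNReal} (hX : HasLaw X μ P) {f : 𝓧 → E}
    (hf : AEStronglyMeasurable f μ) :
    MemLp (fun ω => f (X ω)) p P ↔ MemLp f p μ := by
  rw [← hX.map_eq] at hf ⊢
  exact (memLp_map_measure_iff hf hX.aemeasurable).symm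

lemma integrable_comp_iff (hX : HasLaw X μ P) {f : 𝓧 → E} (hf : AEStronglyMeasurable f μ) :
    Integrable (fun ω => f (X ω)) P ↔ Integrable f μ := by
  simpa only [memLp_one_iff_integrable] using hX.memLp_comp_iff (p := 1) hf

end ProbabilityTheory.HasLaw

section IndependentTuples

variable {Ω ι : Type*} [MeasurableSpace Ω] {μ : Measure Ω} {β : ι → Type*}
  {m : ∀ i, MeasurableSpace (β i)} {f : ∀ i, Ω → β i}

lemma ProbabilityTheory.iIndepFun.indepFun_finset_of_notMem (h : iIndepFun f μ)
    (hf : ∀ i, Measurable (f i)) (i : ι) (T : Finset ι) (hi : i ∉ T) :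
    IndepFun (f i) (fun ω (t : T) => f t ω) μ :=
  (h.indepFun_finset {i} T (Finset.disjoint_singleton_left.2 hi) hf).comp
    (measurable_pi_apply (⟨i, Finset.mem_singleton_self i⟩ : ({i} : Finset ι))) measurable_id

variable (h : ∀ (i : ι) (T : Finset ι), i ∉ T → IndepFun (f i) (fun ω (t : T) => f t ω) μ)
include h

lemma indepFun_comp_of_notMem (i : ι) (T : Finset ι) (hi : i ∉ T) {γ : Type*}
    [MeasurableSpace γ] {φ : (∀ t : T, β t) → γ} (hφ : Measurable φ) :
    IndepFun (f i) (fun ω => φ fun t => f t ω) μ :=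
  (h i T hi).comp measurable_id hφ

variable [IsFiniteMeasure μ]

lemma hasLaw_prodMk₂ (i j : ι) (hij : i ≠ j) {νi : Measure (β i)} {νj : Measure (β j)}
    (hi : HasLaw (f i) νi μ) (hj : HasLaw (f j) νj μ) :
    HasLaw (fun ω => (f i ω, f j ω)) (νi.prod νj) μ :=
  (indepFun_comp_of_notMem h i {j} (by simpa using hij) (φ := fun v => v ⟨j, by simp⟩)
    (measurable_pi_apply _)).hasLaw_prod hi hj

lemma hasLaw_prodMk₃ (i j k : ι) (hnd : [i, j, k].Nodup) {νi : Measure (β i)}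
    {νj : Measure (β j)} {νk : Measure (β k)}
    (hi : HasLaw (f i) νi μ) (hj : HasLaw (f j) νj μ) (hk : HasLaw (f k) νk μ) :
    HasLaw (fun ω => (f i ω, f j ω, f k ω)) (νi.prod (νj.prod νk)) μ := by
  classical
  obtain ⟨hi', hjk⟩ := List.nodup_cons.1 hnd
  exact (indepFun_comp_of_notMem h i [j, k].toFinset (by simpa using hi')
    (φ := fun v => (v ⟨j, by simp⟩, v ⟨k, by simp⟩)) (by fun_prop)).hasLaw_prod hi
    (hasLaw_prodMk₂ h j k (by simpa using hjk) hj hk)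

lemma hasLaw_prodMk₄ (i j k l : ι) (hnd : [i, j, k, l].Nodup) {νi : Measure (β i)}
    {νj : Measure (β j)} {νk : Measure (β k)} {νl : Measure (β l)}
    (hi : HasLaw (f i) νi μ) (hj : HasLaw (f j) νj μ) (hk : HasLaw (f k) νk μ)
    (hl : HasLaw (f l) νl μ) :
    HasLaw (fun ω => (f i ω, f j ω, f k ω, f l ω)) (νi.prod (νj.prod (νk.prod νl))) μ := by
  classical
  obtain ⟨hi', hjkl⟩ := List.nodup_cons.1 hnd
  exact (indepFun_comp_of_notMem h i [j, k, l].toFinset (by simpa using hi')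
    (φ := fun v => (v ⟨j, by simp⟩, v ⟨k, by simp⟩, v ⟨l, by simp⟩)) (by fun_prop)).hasLaw_prod
    hi (hasLaw_prodMk₃ h j k l hjkl hj hk hl)

lemma hasLaw_prodMk₅ (i j k l o : ι) (hnd : [i, j, k, l, o].Nodup) {νi : Measure (β i)}
    {νj : Measure (β j)} {νk : Measure (β k)} {νl : Measure (β l)} {νo : Measure (β o)}
    (hi : HasLaw (f i) νi μ) (hj : HasLaw (f j) νj μ) (hk : HasLaw (f k) νk μ)
    (hl : HasLaw (f l) νl μ) (ho : HasLaw (f o) νo μ) :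
    HasLaw (fun ω => (f i ω, f j ω, f k ω, f l ω, f o ω))
      (νi.prod (νj.prod (νk.prod (νl.prod νo)))) μ := by
  classical
  obtain ⟨hi', hjklo⟩ := List.nodup_cons.1 hnd
  exact (indepFun_comp_of_notMem h i [j, k, l, o].toFinset (by simpa using hi')
    (φ := fun v => (v ⟨j, by simp⟩, v ⟨k, by simp⟩, v ⟨l, by simp⟩, v ⟨o, by simp⟩))
    (by fun_prop)).hasLaw_prod hi (hasLaw_prodMk₄ h j k l o hjklo hj hk hl ho)

end IndependentTuples

lemma integral_sub_integral_prod {α β γ : Type*} [MeasurableSpace α] [MeasurableSpace β]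
    [MeasurableSpace γ] {μα : Measure α} {μβ : Measure β} {μγ : Measure γ} [SFinite μα]
    [SFinite μβ] [SFinite μγ] {F : α × β → ℝ} {H : α × γ → ℝ}
    (hF : Integrable F (μα.prod μβ)) (hH : Integrable H (μα.prod μγ)) :
    ∫ a, (∫ b, F (a, b) ∂μβ - ∫ c, H (a, c) ∂μγ) ∂μα
      = ∫ z, F z ∂(μα.prod μβ) - ∫ z, H z ∂(μα.prod μγ) := by
  rw [integral_sub hF.integral_prod_left hH.integral_prod_left, integral_prod _ hF,
    integral_prod _ hH]

/-- The paper's `β` when `G a w z = g a (w ∘ z.1 z.2ᵀ)`. -/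
noncomputable def expectedCondCov {A B C : Type*} [MeasurableSpace A] [MeasurableSpace B]
    [MeasurableSpace C] (G : A → B → C → ℝ) (ν : Measure A) (κ : Measure B) (ρ : Measure C) :
    ℝ :=
  ∫ a, ∫ a', ∫ w, ((∫ z, G a w z * G a' w z ∂ρ) - (∫ z, G a w z ∂ρ) * ∫ z, G a' w z ∂ρ)
    ∂κ ∂ν ∂ν

lemma expectedCondCov_eq_sub {A B C : Type*} [MeasurableSpace A] [MeasurableSpace B]
    [MeasurableSpace C] {G : A → B → C → ℝ} {ν : Measure A} {κ : Measure B} {ρ : Measure C}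
    [SFinite ν] [SFinite κ] [SFinite ρ]
    (hH : Integrable (fun t : A × A × B × C => G t.1 t.2.2.1 t.2.2.2 * G t.2.1 t.2.2.1 t.2.2.2)
      (ν.prod (ν.prod (κ.prod ρ))))
    (hK : Integrable
      (fun t : A × A × B × C × C => G t.1 t.2.2.1 t.2.2.2.1 * G t.2.1 t.2.2.1 t.2.2.2.2)
      (ν.prod (ν.prod (κ.prod (ρ.prod ρ))))) :
    expectedCondCov G ν κ ρ
      = ∫ t, G t.1 t.2.2.1 t.2.2.2 * G t.2.1 t.2.2.1 t.2.2.2 ∂(ν.prod (ν.prod (κ.prod ρ)))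
        - ∫ t, G t.1 t.2.2.1 t.2.2.2.1 * G t.2.1 t.2.2.1 t.2.2.2.2
            ∂(ν.prod (ν.prod (κ.prod (ρ.prod ρ)))) := by
  refine (integral_congr_ae ?_).trans (integral_sub_integral_prod hH hK)
  filter_upwards [hH.prod_right_ae, hK.prod_right_ae] with a ha hka
  refine (integral_congr_ae ?_).trans (integral_sub_integral_prod ha hka)
  filter_upwards [ha.prod_right_ae, hka.prod_right_ae] with a' ha' hka'
  refine (integral_congr_ae ?_).trans (integral_sub_integral_prod ha' hka')
  filter_upwards with w
  rw [← integral_prod_mul]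

section SharedVsIndependentSigns

variable {Ω A B C : Type*} [MeasurableSpace Ω] [MeasurableSpace A] [MeasurableSpace B]
  [MeasurableSpace C] {μ : Measure Ω} [IsProbabilityMeasure μ] {ν : Measure A} {κ : Measure B}
  {ρ : Measure C} [SFinite ν] [SFinite κ] [SFinite ρ] {G : A → B → C → ℝ}

lemma covariance_shared_sub_covariance_independent
    (hG : Measurable fun t : A × B × C => G t.1 t.2.1 t.2.2)
    (hL2 : MemLp (fun t : A × B × C => G t.1 t.2.1 t.2.2) 2 (ν.prod (κ.prod ρ)))
    {X X' : Ω → A} {W : Ω → B} {Z Z₁ Z₂ : Ω → C}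
    (hsh : HasLaw (fun ω => (X ω, W ω, Z ω)) (ν.prod (κ.prod ρ)) μ)
    (hsh' : HasLaw (fun ω => (X' ω, W ω, Z ω)) (ν.prod (κ.prod ρ)) μ)
    (hfl : HasLaw (fun ω => (X ω, W ω, Z₁ ω)) (ν.prod (κ.prod ρ)) μ)
    (hfl' : HasLaw (fun ω => (X' ω, W ω, Z₂ ω)) (ν.prod (κ.prod ρ)) μ)
    (hsh₂ : HasLaw (fun ω => (X ω, X' ω, W ω, Z ω)) (ν.prod (ν.prod (κ.prod ρ))) μ)
    (hfl₂ : HasLaw (fun ω => (X ω, X' ω, W ω, Z₁ ω, Z₂ ω))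
      (ν.prod (ν.prod (κ.prod (ρ.prod ρ)))) μ) :
    cov[fun ω => G (X ω) (W ω) (Z ω), fun ω => G (X' ω) (W ω) (Z ω); μ]
      - cov[fun ω => G (X ω) (W ω) (Z₁ ω), fun ω => G (X' ω) (W ω) (Z₂ ω); μ]
      = expectedCondCov G ν κ ρ := by
  have hGm := hG.aestronglyMeasurable (μ := ν.prod (κ.prod ρ))
  have hGG : Measurable fun t : A × A × B × C => G t.1 t.2.2.1 t.2.2.2 * G t.2.1 t.2.2.1 t.2.2.2 :=
    by fun_prop
  have hGG₁₂ : Measurable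
      fun t : A × A × B × C × C => G t.1 t.2.2.1 t.2.2.2.1 * G t.2.1 t.2.2.1 t.2.2.2.2 := by
    fun_prop
  have hsh_L2 := (hsh.memLp_comp_iff hGm).2 hL2
  have hsh'_L2 := (hsh'.memLp_comp_iff hGm).2 hL2
  have hfl_L2 := (hfl.memLp_comp_iff hGm).2 hL2
  have hfl'_L2 := (hfl'.memLp_comp_iff hGm).2 hL2
  have hmean : μ[fun ω => G (X ω) (W ω) (Z ω)] = μ[fun ω => G (X ω) (W ω) (Z₁ ω)] :=
    (hsh.integral_comp hGm).trans (hfl.integral_comp hGm).symm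
  have hmean' : μ[fun ω => G (X' ω) (W ω) (Z ω)] = μ[fun ω => G (X' ω) (W ω) (Z₂ ω)] :=
    (hsh'.integral_comp hGm).trans (hfl'.integral_comp hGm).symm
  have hmom : μ[(fun ω => G (X ω) (W ω) (Z ω)) * fun ω => G (X' ω) (W ω) (Z ω)]
      = ∫ t, G t.1 t.2.2.1 t.2.2.2 * G t.2.1 t.2.2.1 t.2.2.2 ∂(ν.prod (ν.prod (κ.prod ρ))) :=
    hsh₂.integral_comp hGG.aestronglyMeasurable
  have hmom₁₂ : μ[(fun ω => G (X ω) (W ω) (Z₁ ω)) * fun ω => G (X' ω) (W ω) (Z₂ ω)]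
      = ∫ t, G t.1 t.2.2.1 t.2.2.2.1 * G t.2.1 t.2.2.1 t.2.2.2.2
          ∂(ν.prod (ν.prod (κ.prod (ρ.prod ρ)))) :=
    hfl₂.integral_comp hGG₁₂.aestronglyMeasurable
  rw [covariance_eq_sub hsh_L2 hsh'_L2, covariance_eq_sub hfl_L2 hfl'_L2, hmean, hmean', hmom,
    hmom₁₂, expectedCondCov_eq_sub ((hsh₂.integrable_comp_iff hGG.aestronglyMeasurable).1
      (hsh_L2.integrable_mul hsh'_L2)) ((hfl₂.integrable_comp_iff hGG₁₂.aestronglyMeasurable).1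
      (hfl_L2.integrable_mul hfl'_L2))]
  ring

theorem variance_average_shared_sub_variance_average_independent {N : ℕ}
    (hG : Measurable fun t : A × B × C => G t.1 t.2.1 t.2.2)
    {X : Fin N → Ω → A} {W : Ω → B} {Z : Ω → C} {Zs : Fin N → Ω → C}
    (hsh : ∀ n, HasLaw (fun ω => (X n ω, W ω, Z ω)) (ν.prod (κ.prod ρ)) μ)
    (hfl : ∀ n, HasLaw (fun ω => (X n ω, W ω, Zs n ω)) (ν.prod (κ.prod ρ)) μ)
    (hsh₂ : ∀ n m, n ≠ m →
      HasLaw (fun ω => (X n ω, X m ω, W ω, Z ω)) (ν.prod (ν.prod (κ.prod ρ))) μ)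
    (hfl₂ : ∀ n m, n ≠ m → HasLaw (fun ω => (X n ω, X m ω, W ω, Zs n ω, Zs m ω))
      (ν.prod (ν.prod (κ.prod (ρ.prod ρ)))) μ)
    {n₀ : Fin N} (hL2 : MemLp (fun ω => G (X n₀ ω) (W ω) (Z ω)) 2 μ) :
    Var[fun ω => (N : ℝ)⁻¹ * ∑ n, G (X n ω) (W ω) (Z ω); μ]
      - Var[fun ω => (N : ℝ)⁻¹ * ∑ n, G (X n ω) (W ω) (Zs n ω); μ]
      = ((N : ℝ) - 1) / N * expectedCondCov G ν κ ρ := by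
  have hGm := hG.aestronglyMeasurable (μ := ν.prod (κ.prod ρ))
  have hL2' := ((hsh n₀).memLp_comp_iff hGm).1 hL2
  refine variance_average_sub_variance_average (fun n => ((hsh n).memLp_comp_iff hGm).2 hL2')
    (fun n => ((hfl n).memLp_comp_iff hGm).2 hL2') (fun n => ?_) fun n m hnm =>
      covariance_shared_sub_covariance_independent hG hL2' (hsh n) (hsh m) (hfl n) (hfl m)
        (hsh₂ n m hnm) (hfl₂ n m hnm)
  exact ((hsh n).covariance_fun_comp hG.aemeasurable hG.aemeasurable).trans
    ((hfl n).covariance_fun_comp hG.aemeasurable hG.aemeasurable).symm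

end SharedVsIndependentSigns

lemma measurable_flipPert {p q : ℕ} :
    Measurable fun t : (Fin p → Fin q → ℝ) × ((Fin p → ℝ) × (Fin q → ℝ)) => flipPert t.1 t.2 := by
  unfold flipPert
  fun_prop

theorem flipout_reduces_variance
    {Ω A : Type} [MeasurableSpace Ω] [MeasurableSpace A]
    (μ : Measure Ω) [IsProbabilityMeasure μ]
    {N p q : ℕ} (hN : 0 < N)
    (x : Fin N → Ω → A) (W : Ω → Fin p → Fin q → ℝ)
    -- per-example flipout sign vectors
    (r : Fin N → Ω → Fin p → ℝ) (s : Fin N → Ω → Fin q → ℝ)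
    -- shared sign vectors
    (rsh : Ω → Fin p → ℝ) (ssh : Ω → Fin q → ℝ)
    (g : A → (Fin p → Fin q → ℝ) → ℝ)
    (hx : ∀ n, Measurable (x n)) (hW : Measurable W)
    (hr : ∀ n, Measurable (r n)) (hs : ∀ n, Measurable (s n))
    (hrsh : Measurable rsh) (hssh : Measurable ssh)
    (hg : Measurable (Function.uncurry g))
    -- inputs, per-example sign pairs, shared sign pair, and base perturbation
    -- are all jointly independent
    (hjoint : iIndepFun
      (β := fun i : Fin N ⊕ Fin N ⊕ Unit ⊕ Unit =>
        match i with
        | .inl _ => A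
        | .inr (.inl _) => (Fin p → ℝ) × (Fin q → ℝ)
        | .inr (.inr (.inl _)) => (Fin p → ℝ) × (Fin q → ℝ)
        | .inr (.inr (.inr _)) => Fin p → Fin q → ℝ)
      (m := fun i => match i with
        | .inl _ => inferInstance
        | .inr (.inl _) => inferInstance
        | .inr (.inr (.inl _)) => inferInstance
        | .inr (.inr (.inr _)) => inferInstance)
      (fun i => match i with
        | .inl n => x n
        | .inr (.inl n) => fun ω => (r n ω, s n ω)
        | .inr (.inr (.inl _)) => fun ω => (rsh ω, ssh ω)
        | .inr (.inr (.inr _)) => W) μ)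
    -- identical distributions: the inputs are i.i.d., and all sign pairs
    -- (flipout and shared) share a common distribution
    (hxid : ∀ n, Measure.map (x n) μ = Measure.map (x ⟨0, hN⟩) μ)
    (hrsid : ∀ n, Measure.map (fun ω => (r n ω, s n ω)) μ
      = Measure.map (fun ω => (rsh ω, ssh ω)) μ)
    -- square integrability
    (hL2sh : MemLp (fun ω =>
      g (x ⟨0, hN⟩ ω) (flipPert (W ω) (rsh ω, ssh ω))) 2 μ) :
    (variance (fun ω =>
        (N : ℝ)⁻¹ * ∑ n, g (x n ω) (flipPert (W ω) (rsh ω, ssh ω))) μ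
      - variance (fun ω =>
          (N : ℝ)⁻¹ * ∑ n, g (x n ω) (flipPert (W ω) (r n ω, s n ω))) μ
      = ((N : ℝ) - 1) / N *
          ∫ a, ∫ a', ∫ w,
            ((∫ z, g a (flipPert w z) * g a' (flipPert w z)
                ∂(Measure.map (fun ω => (rsh ω, ssh ω)) μ))
              - (∫ z, g a (flipPert w z)
                  ∂(Measure.map (fun ω => (rsh ω, ssh ω)) μ)) *
                (∫ z, g a' (flipPert w z)
                  ∂(Measure.map (fun ω => (rsh ω, ssh ω)) μ)))
            ∂(Measure.map W μ)
            ∂(Measure.map (x ⟨0, hN⟩) μ) ∂(Measure.map (x ⟨0, hN⟩) μ)) ∧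
    ((0 : ℝ) ≤
        (∫ a, ∫ a', ∫ w,
            ((∫ z, g a (flipPert w z) * g a' (flipPert w z)
                ∂(Measure.map (fun ω => (rsh ω, ssh ω)) μ))
              - (∫ z, g a (flipPert w z)
                  ∂(Measure.map (fun ω => (rsh ω, ssh ω)) μ)) *
                (∫ z, g a' (flipPert w z)
                  ∂(Measure.map (fun ω => (rsh ω, ssh ω)) μ)))
            ∂(Measure.map W μ)
            ∂(Measure.map (x ⟨0, hN⟩) μ) ∂(Measure.map (x ⟨0, hN⟩) μ)) →
      variance (fun ω =>
          (N : ℝ)⁻¹ * ∑ n, g (x n ω) (flipPert (W ω) (r n ω, s n ω))) μ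
        ≤ variance (fun ω =>
            (N : ℝ)⁻¹ * ∑ n, g (x n ω) (flipPert (W ω) (rsh ω, ssh ω))) μ) := by
  have hind := hjoint.indepFun_finset_of_notMem (by
    rintro (n | n | _ | _)
    exacts [hx n, (hr n).prodMk (hs n), hrsh.prodMk hssh, hW])
  have hxν : ∀ n, HasLaw (x n) (μ.map (x ⟨0, hN⟩)) μ := fun n => ⟨(hx n).aemeasurable, hxid n⟩
  have hWκ : HasLaw W (μ.map W) μ := ⟨hW.aemeasurable, rfl⟩
  have hzρ : ∀ n, HasLaw (fun ω => (r n ω, s n ω)) (μ.map fun ω => (rsh ω, ssh ω)) μ :=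
    fun n => ⟨((hr n).prodMk (hs n)).aemeasurable, hrsid n⟩
  have hzshρ : HasLaw (fun ω => (rsh ω, ssh ω)) (μ.map fun ω => (rsh ω, ssh ω)) μ :=
    ⟨(hrsh.prodMk hssh).aemeasurable, rfl⟩
  have hdiff := variance_average_shared_sub_variance_average_independent
    (G := fun a w z => g a (flipPert w z)) (X := x) (W := W) (Z := fun ω => (rsh ω, ssh ω))
    (Zs := fun n ω => (r n ω, s n ω))
    (hg.comp (measurable_fst.prodMk (measurable_flipPert.comp measurable_snd)))
    (fun n => hasLaw_prodMk₃ hind (.inl n) (.inr (.inr (.inr ()))) (.inr (.inr (.inl ())))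
      (by simp) (hxν n) hWκ hzshρ)
    (fun n => hasLaw_prodMk₃ hind (.inl n) (.inr (.inr (.inr ()))) (.inr (.inl n))
      (by simp) (hxν n) hWκ (hzρ n))
    (fun n m hnm => hasLaw_prodMk₄ hind (.inl n) (.inl m) (.inr (.inr (.inr ())))
      (.inr (.inr (.inl ()))) (by simpa using hnm) (hxν n) (hxν m) hWκ hzshρ)
    (fun n m hnm => hasLaw_prodMk₅ hind (.inl n) (.inl m) (.inr (.inr (.inr ())))
      (.inr (.inl n)) (.inr (.inl m)) (by simpa using hnm) (hxν n) (hxν m) hWκ (hzρ n) (hzρ m))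
    hL2sh
  refine ⟨hdiff, fun hβ => sub_nonneg.mp ?_⟩
  rw [hdiff]
  exact mul_nonneg (div_nonneg (sub_nonneg.mpr (mod_cast hN)) N.cast_nonneg) hβ
end
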